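/- Let X be a real Banach space of dimension greater than 1. Suppose there is a family (x*_α)_{α<ω₁} of nonzero continuous linear functionals in the closed unit ball of X* such that for every x ∈ X the set {α < ω₁ : x*_α(x) ≠ 0} is at most countable. Then cov(X) = ℵ₁. -/

import Mathlib

open Cardinal Set

universe u v

noncomputable section

/-- A hyperplane of a normed space: the kernel of a nonzero continuous linear functional. -/
def IsHyperplane {X : Type u} [NormedAddCommGroup X] [NormedSpace ℝ X] (H : Set X) : Prop :=
  ∃ f : X →L[ℝ] ℝ, f ≠ 0 ∧ H = {x | f x = 0}

/-- Member of the σ-ideal generated by hyperplanes: covered by countably many hyperplanes. -/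
def InHyperplaneIdeal {X : Type u} [NormedAddCommGroup X] [NormedSpace ℝ X] (Y : Set X) : Prop :=
  ∃ F : Set (Set X), F.Countable ∧ (∀ H ∈ F, IsHyperplane H) ∧ Y ⊆ ⋃₀ F

/-- Additivity of the hyperplane σ-ideal. -/
def addH (X : Type u) [NormedAddCommGroup X] [NormedSpace ℝ X] : Cardinal.{u} :=
  sInf {c | ∃ F : Set (Set X), (∀ A ∈ F, InHyperplaneIdeal A) ∧
    ¬ InHyperplaneIdeal (⋃₀ F) ∧ #F = c}

/-- Covering number of the hyperplane σ-ideal. -/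
def covH (X : Type u) [NormedAddCommGroup X] [NormedSpace ℝ X] : Cardinal.{u} :=
  sInf {c | ∃ F : Set (Set X), (∀ A ∈ F, InHyperplaneIdeal A) ∧ ⋃₀ F = Set.univ ∧ #F = c}

/-- Uniformity of the hyperplane σ-ideal. -/
def nonH (X : Type u) [NormedAddCommGroup X] [NormedSpace ℝ X] : Cardinal.{u} :=
  sInf {c | ∃ Y : Set X, ¬ InHyperplaneIdeal Y ∧ #Y = c}

/-- Cofinality of the hyperplane σ-ideal. -/
def cofH (X : Type u) [NormedAddCommGroup X] [NormedSpace ℝ X] : Cardinal.{u} :=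
  sInf {c | ∃ F : Set (Set X), (∀ A ∈ F, InHyperplaneIdeal A) ∧
    (∀ Y : Set X, InHyperplaneIdeal Y → ∃ A ∈ F, Y ⊆ A) ∧ #F = c}

/-- Density of a topological space: least cardinality of a dense subset. -/
def densH (X : Type u) [TopologicalSpace X] : Cardinal.{u} :=
  sInf {c | ∃ D : Set X, Dense D ∧ #D = c}

/-- `cf([κ]^ω)`: least cardinality of a cofinal family of countable subsets of κ. -/
def cfCtblSubsets (κ : Cardinal.{u}) : Cardinal.{u} :=
  sInf {c | ∃ F : Set (Set κ.out), (∀ S ∈ F, S.Countable) ∧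
    (∀ S : Set κ.out, S.Countable → ∃ T ∈ F, S ⊆ T) ∧ #F = c}

/-- A compact space has small diagonal. -/
def HasSmallDiagonal (K : Type u) [TopologicalSpace K] : Prop :=
  ∀ A : Set (K × K), #A = Cardinal.aleph 1 → A ∩ Set.diagonal K = ∅ →
    ∃ B ⊆ A, ¬ B.Countable ∧ closure B ∩ Set.diagonal K = ∅

/-- A topological space is scattered. -/
def IsScattered (K : Type u) [TopologicalSpace K] : Prop :=
  ∀ S : Set K, S.Nonempty → ∃ x ∈ S, ∃ U : Set K, IsOpen U ∧ U ∩ S = {x}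

/-!
The kernels of the functionals `f i` are ℵ₁ hyperplanes, and they cover `X` because each vector
is annihilated by all but countably many `f i`. Conversely a hyperplane is closed with empty
interior, so by the Baire category theorem no countably many of them cover a Banach space.
-/

section HyperplaneIdeal

variable {X : Type u} [NormedAddCommGroup X] [NormedSpace ℝ X]

theorem IsHyperplane.isNowhereDense {H : Set X} (hH : IsHyperplane H) : IsNowhereDense H := by
  obtain ⟨g, hg, rfl⟩ := hH
  rw [(isClosed_eq g.continuous continuous_const).isNowhereDense_iff,
    ← not_nonempty_iff_eq_empty]
  intro hint
  have hker : LinearMap.ker (g : X →ₗ[ℝ] ℝ) = ⊤ := Submodule.eq_top_of_nonempty_interior' _ hint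
  exact hg (ContinuousLinearMap.coe_injective (LinearMap.ker_eq_top.1 hker))

theorem IsHyperplane.inHyperplaneIdeal {H : Set X} (hH : IsHyperplane H) :
    InHyperplaneIdeal H :=
  ⟨{H}, countable_singleton H, by simpa using hH, subset_sUnion_of_mem rfl⟩

theorem InHyperplaneIdeal.isMeagre {Y : Set X} (hY : InHyperplaneIdeal Y) : IsMeagre Y := by
  obtain ⟨F, hFc, hFh, hYF⟩ := hY
  refine IsMeagre.mono hYF ?_
  rw [sUnion_eq_biUnion]
  exact isMeagre_biUnion hFc fun H hH => (hFh H hH).isNowhereDense.isMeagre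

theorem not_countable_of_sUnion_eq_univ [CompleteSpace X] {F : Set (Set X)}
    (hF : ∀ A ∈ F, InHyperplaneIdeal A) (hcov : ⋃₀ F = Set.univ) : ¬ F.Countable := by
  intro hFc
  have hmeagre : IsMeagre (Set.univ : Set X) := by
    rw [← hcov, sUnion_eq_biUnion]
    exact isMeagre_biUnion hFc fun A hA => (hF A hA).isMeagre
  exact not_isMeagre_of_isOpen isOpen_univ univ_nonempty hmeagre

theorem covH_eq_aleph_one_of_sUnion_eq_univ [CompleteSpace X] {F : Set (Set X)}
    (hF : ∀ A ∈ F, InHyperplaneIdeal A) (hcov : ⋃₀ F = Set.univ) (hcard : #F ≤ ℵ₁) :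
    covH X = ℵ₁ := by
  unfold covH
  refine le_antisymm ((csInf_le' ?_).trans hcard) (le_csInf ⟨#F, ?_⟩ ?_)
  · exact ⟨F, hF, hcov, rfl⟩
  · exact ⟨F, hF, hcov, rfl⟩
  rintro c ⟨F', hF', hcov', rfl⟩
  rw [aleph_one_le_iff, aleph0_lt_mk_iff, ← not_countable_iff]
  exact not_countable_of_sUnion_eq_univ hF' hcov'

end HyperplaneIdeal

theorem stmt13_general (X : Type u) [NormedAddCommGroup X] [NormedSpace ℝ X] [CompleteSpace X]
    (ι : Type v) (hι : #ι = Cardinal.aleph 1)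
    (f : ι → X →L[ℝ] ℝ) (hne : ∀ i, f i ≠ 0)
    (hc : ∀ x : X, {i : ι | f i x ≠ 0}.Countable) :
    covH X = Cardinal.aleph 1 := by
  have : Uncountable ι := by
    rw [← aleph0_lt_mk_iff, hι]
    exact aleph0_lt_aleph_one
  refine covH_eq_aleph_one_of_sUnion_eq_univ (F := range fun i => {x | f i x = 0}) ?_ ?_ ?_
  · rintro _ ⟨i, rfl⟩
    exact IsHyperplane.inHyperplaneIdeal ⟨f i, hne i, rfl⟩
  · refine eq_univ_of_forall fun x => ?_
    obtain ⟨i, hi⟩ : ∃ i, f i x = 0 := by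
      by_contra! hall
      exact not_countable_univ (by simpa [hall] using hc x)
    exact ⟨_, ⟨i, rfl⟩, hi⟩
  · simpa [hι] using mk_range_le_lift (f := fun i => {x | f i x = 0})

/-- an ω₁-family of nonzero norm-≤1 functionals, each vector killing
all but countably many of them, gives cov(X) = ℵ₁. -/
theorem stmt13 (X : Type u) [NormedAddCommGroup X] [NormedSpace ℝ X] [CompleteSpace X]
    (hdim : 1 < Module.rank ℝ X)
    (ι : Type v) (hι : #ι = Cardinal.aleph 1)
    (f : ι → X →L[ℝ] ℝ) (hne : ∀ i, f i ≠ 0) (hnorm : ∀ i, ‖f i‖ ≤ 1)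
    (hc : ∀ x : X, {i : ι | f i x ≠ 0}.Countable) :
    covH X = Cardinal.aleph 1 :=
  stmt13_general X ι hι f hne hc
end
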